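/- arXiv:2410.00620 — 4 statements merged into one kernel-verified Lean document; each statement's English description precedes it below -/
import Mathlib

section
/- Let 𝓕_N(ψ) = (∑_{i=1}^N w(X_i) ψ(X_i)) / (∑_{i=1}^N w(X_i)) be the self-normalized importance-sampling estimator (defined to be 0 when the denominator vanishes). Then 𝓕_N(ψ) converges to μ(ψ) = ∫ ψ dμ in L²(P) as N → ∞, i.e. E[(𝓕_N(ψ) − μ(ψ))²] → 0; in particular 𝓕_N(ψ) is a weakly consistent estimator of μ(ψ). (Theorem 1 of the paper in the single-importance-sampling-step case, which is the base case t = 0 of its induction.) -/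
/-!
By the strong law of large numbers, applied to `w ∘ Xᵢ` and `(w * ψ) ∘ Xᵢ` (both
integrable, since `∫ w dλ = μ(𝒳) = 1` and `ψ` is bounded), the numerator and the
denominator of `𝓕_N(ψ)`, divided by `N`, converge almost surely to `∫ w ψ dλ = μ(ψ)` and
to `∫ w dλ = 1`. Hence `𝓕_N(ψ) → μ(ψ)` almost surely. Being a weighted average of values
of `ψ`, `𝓕_N(ψ)` is bounded by `M`, so dominated convergence upgrades this to convergence
in `L²(P)`.
-/

open MeasureTheory ProbabilityTheory Filter Topology Finset

theorem abs_sum_mul_div_sum_le {ι : Type*} (s : Finset ι) {w f : ι → ℝ} {M : ℝ}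
    (hw : ∀ i ∈ s, 0 ≤ w i) (hf : ∀ i ∈ s, |f i| ≤ M) (hM : 0 ≤ M) :
    |(∑ i ∈ s, w i * f i) / ∑ i ∈ s, w i| ≤ M := by
  have hsum : 0 ≤ ∑ i ∈ s, w i := sum_nonneg hw
  rw [abs_div, abs_of_nonneg hsum]
  refine div_le_of_le_mul₀ hsum hM ?_
  calc |∑ i ∈ s, w i * f i| ≤ ∑ i ∈ s, |w i * f i| := abs_sum_le_sum_abs _ _
    _ ≤ ∑ i ∈ s, M * w i := sum_le_sum fun i hi => by
        rw [abs_mul, abs_of_nonneg (hw i hi), mul_comm M]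
        exact mul_le_mul_of_nonneg_left (hf i hi) (hw i hi)
    _ = M * ∑ i ∈ s, w i := (mul_sum _ _ _).symm

theorem tendsto_div_of_tendsto_div_natCast {u v : ℕ → ℝ} {a b : ℝ} (hb : b ≠ 0)
    (hu : Tendsto (fun N : ℕ => u N / N) atTop (𝓝 a))
    (hv : Tendsto (fun N : ℕ => v N / N) atTop (𝓝 b)) :
    Tendsto (fun N => u N / v N) atTop (𝓝 (a / b)) := by
  refine (hu.div hv hb).congr' ?_
  filter_upwards [eventually_ne_atTop 0] with N hN
  exact div_div_div_cancel_right₀ (Nat.cast_ne_zero.2 hN) _ _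

theorem integral_withDensity_ofReal_eq_integral_mul {𝒳 : Type*} [MeasurableSpace 𝒳]
    {lam : Measure 𝒳} {w : 𝒳 → ℝ} (hw : Measurable w) (hw_nonneg : ∀ x, 0 ≤ w x)
    (g : 𝒳 → ℝ) :
    ∫ x, g x ∂lam.withDensity (fun x => ENNReal.ofReal (w x)) = ∫ x, w x * g x ∂lam := by
  rw [integral_withDensity_eq_integral_toReal_smul hw.ennreal_ofReal
    (.of_forall fun _ => ENNReal.ofReal_lt_top)]
  simp only [ENNReal.toReal_ofReal (hw_nonneg _), smul_eq_mul]

theorem strong_law_ae_comp {Ω 𝒳 : Type*} [MeasurableSpace Ω] [MeasurableSpace 𝒳]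
    {P : Measure Ω} {lam : Measure 𝒳} {X : ℕ → Ω → 𝒳} (hX : ∀ i, AEMeasurable (X i) P)
    (hX_law : ∀ i, P.map (X i) = lam)
    (hX_indep : Pairwise fun i j => IndepFun (X i) (X j) P)
    {f : 𝒳 → ℝ} (hf : Measurable f) (hf_int : Integrable f lam) :
    ∀ᵐ ω ∂P, Tendsto (fun N : ℕ => (∑ i ∈ range N, f (X i ω)) / N) atTop
      (𝓝 (∫ x, f x ∂lam)) := by
  have hident : ∀ i, IdentDistrib (X i) (X 0) P P :=
    fun i => ⟨hX i, hX 0, by rw [hX_law i, hX_law 0]⟩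
  have hmean : ∫ ω, (f ∘ X 0) ω ∂P = ∫ x, f x ∂lam := by
    rw [← hX_law 0, integral_map (hX 0) hf.aestronglyMeasurable, Function.comp_def]
  have hint : Integrable (f ∘ X 0) P := by
    rw [← hX_law 0] at hf_int
    exact hf_int.comp_aemeasurable (hX 0)
  have hlaw := strong_law_ae_real (fun i => f ∘ X i) hint
    (fun i j hij => (hX_indep hij).comp hf hf) fun i => (hident i).comp hf
  rwa [hmean] at hlaw

theorem tendsto_integral_sq_sub_of_ae_tendsto {Ω : Type*} [MeasurableSpace Ω]
    {P : Measure Ω} [IsFiniteMeasure P] {F : ℕ → Ω → ℝ} {c K : ℝ}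
    (hF : ∀ N, AEStronglyMeasurable (F N) P) (hF_bdd : ∀ N, ∀ᵐ ω ∂P, |F N ω| ≤ K)
    (hF_lim : ∀ᵐ ω ∂P, Tendsto (F · ω) atTop (𝓝 c)) :
    Tendsto (fun N => ∫ ω, (F N ω - c) ^ 2 ∂P) atTop (𝓝 0) := by
  have hbound : ∀ N, ∀ᵐ ω ∂P, ‖(F N ω - c) ^ 2‖ ≤ (K + |c|) ^ 2 := fun N => by
    filter_upwards [hF_bdd N] with ω hω
    have hdev : |F N ω - c| ≤ K + |c| := (abs_sub _ _).trans (add_le_add hω le_rfl)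
    rw [Real.norm_eq_abs, abs_pow]
    exact pow_le_pow_left₀ (abs_nonneg _) hdev 2
  have hlim : ∀ᵐ ω ∂P, Tendsto (fun N => (F N ω - c) ^ 2) atTop (𝓝 0) := by
    filter_upwards [hF_lim] with ω hω
    simpa using (hω.sub_const c).pow 2
  simpa using tendsto_integral_of_dominated_convergence _
    (fun N => ((hF N).sub aestronglyMeasurable_const).pow 2) (integrable_const _) hbound hlim

theorem selfNormalizedIS_L2_convergence_general
    {𝒳 : Type*} [MeasurableSpace 𝒳]
    (lam mu : Measure 𝒳) [IsProbabilityMeasure mu]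
    (w : 𝒳 → ℝ) (hw_meas : Measurable w) (hw_nonneg : ∀ x, 0 ≤ w x)
    (hmu : mu = lam.withDensity (fun x => ENNReal.ofReal (w x)))
    (ψ : 𝒳 → ℝ) (hψ_meas : Measurable ψ)
    (M : ℝ) (hψ_bdd : ∀ x, |ψ x| ≤ M)
    {Ω : Type*} [MeasurableSpace Ω] (P : Measure Ω) [IsProbabilityMeasure P]
    (X : ℕ → Ω → 𝒳) (hX_meas : ∀ i, Measurable (X i))
    (hX_law : ∀ i, P.map (X i) = lam)
    (hX_indep : iIndepFun X P) :
    Tendsto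
      (fun N : ℕ =>
        ∫ ω, ((∑ i ∈ Finset.range N, w (X i ω) * ψ (X i ω)) /
                (∑ i ∈ Finset.range N, w (X i ω)) - ∫ x, ψ x ∂mu) ^ 2 ∂P)
      atTop (nhds 0) := by
  have hw_lintegral : ∫⁻ x, ENNReal.ofReal (w x) ∂lam = 1 := by
    simpa [hmu] using measure_univ (μ := mu)
  have hw_int : Integrable w lam := (lintegral_ofReal_ne_top_iff_integrable
    hw_meas.aestronglyMeasurable (.of_forall hw_nonneg)).1 (by simp [hw_lintegral])
  have hw_mean : ∫ x, w x ∂lam = 1 := by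
    rw [integral_eq_lintegral_of_nonneg_ae (.of_forall hw_nonneg) hw_meas.aestronglyMeasurable,
      hw_lintegral, ENNReal.toReal_one]
  have hψ_abs_bdd : ∀ x, |ψ x| ≤ |M| := fun x => (hψ_bdd x).trans (le_abs_self M)
  have hwψ_int : Integrable (fun x => w x * ψ x) lam :=
    hw_int.mul_bdd hψ_meas.aestronglyMeasurable (.of_forall hψ_abs_bdd)
  have hwψ_mean : ∫ x, w x * ψ x ∂lam = ∫ x, ψ x ∂mu := by
    rw [hmu, integral_withDensity_ofReal_eq_integral_mul hw_meas hw_nonneg]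
  have hX_aemeas : ∀ i, AEMeasurable (X i) P := fun i => (hX_meas i).aemeasurable
  have hX_pair : Pairwise fun i j => IndepFun (X i) (X j) P :=
    fun i j hij => hX_indep.indepFun hij
  refine tendsto_integral_sq_sub_of_ae_tendsto
    (fun N => (by fun_prop : Measurable _).aestronglyMeasurable)
    (fun N => .of_forall fun ω => abs_sum_mul_div_sum_le _ (fun i _ => hw_nonneg _)
      (fun i _ => hψ_abs_bdd _) (abs_nonneg M)) ?_
  filter_upwards [strong_law_ae_comp hX_aemeas hX_law hX_pair hw_meas hw_int,
    strong_law_ae_comp (f := fun x => w x * ψ x) hX_aemeas hX_law hX_pair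
      (hw_meas.mul hψ_meas) hwψ_int] with ω hw hwψ
  have hratio := tendsto_div_of_tendsto_div_natCast (by simp [hw_mean]) hwψ hw
  rwa [hw_mean, hwψ_mean, div_one] at hratio

/-- **Theorem 1 (base case `t = 0`):** the self-normalized importance-sampling
estimator `𝓕_N(ψ)` converges to `μ(ψ)` in `L²(P)` as `N → ∞`. -/
theorem selfNormalizedIS_L2_convergence
    {𝒳 : Type*} [MeasurableSpace 𝒳]
    (lam mu : Measure 𝒳) [IsProbabilityMeasure lam] [IsProbabilityMeasure mu]
    (w : 𝒳 → ℝ) (hw_meas : Measurable w) (hw_nonneg : ∀ x, 0 ≤ w x)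
    (hmu : mu = lam.withDensity (fun x => ENNReal.ofReal (w x)))
    (C : ℝ) (hC : 0 < C) (hw_bdd : ∀ᵐ x ∂lam, w x ≤ C)
    (ψ : 𝒳 → ℝ) (hψ_meas : Measurable ψ)
    (M : ℝ) (hψ_bdd : ∀ x, |ψ x| ≤ M)
    {Ω : Type*} [MeasurableSpace Ω] (P : Measure Ω) [IsProbabilityMeasure P]
    (X : ℕ → Ω → 𝒳) (hX_meas : ∀ i, Measurable (X i))
    (hX_law : ∀ i, P.map (X i) = lam)
    (hX_indep : iIndepFun X P) :
    Tendsto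
      (fun N : ℕ =>
        ∫ ω, ((∑ i ∈ Finset.range N, w (X i ω) * ψ (X i ω)) /
                (∑ i ∈ Finset.range N, w (X i ω)) - ∫ x, ψ x ∂mu) ^ 2 ∂P)
      atTop (nhds 0) :=
  selfNormalizedIS_L2_convergence_general lam mu w hw_meas hw_nonneg hmu ψ hψ_meas M hψ_bdd P X
    hX_meas hX_law hX_indep
end

section
/- Assume: (i) for every bounded measurable φ : 𝒳 → ℝ, ∑_{n=1}^N w̄ⁿ φ(Xⁿ) → ∫ φ dπ in L²(P) as N → ∞; (ii) g is bounded and Z > 0. Then the reweighted propagated particle estimate ∑_{n=1}^N g(Yⁿ) ψ(Yⁿ) / ∑_{n=1}^N g(Yⁿ) (defined to be 0 when the denominator vanishes) converges in L²(P) to ∫ ψ dν as N → ∞, for every measurable ψ with |ψ| ≤ M. (One time-step of Theorem 1 for the bootstrap particle filter: L² consistency propagates through sampling from the particle mixture and likelihood reweighting.) -/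
/-!
Conditionally on the particle system the `Yⁿ` are i.i.d. with law `Λ_N`, so for bounded `f` the
sample mean `N⁻¹ ∑ f(Yⁿ)` has conditional mean `∑ w̄ⁿ (Mf)(Xⁿ)` and conditional variance at most
`‖f‖²_∞ / N`. Together with the consistency of the weighted particles, applied to `Mf`, this gives
`N⁻¹ ∑ f(Yⁿ) → ∫ f d(πM)` in `L²`. Applied to `gψ` and `g`, numerator and denominator of the
estimator (both divided by `N`) converge in `L²` to `a = ∫ gψ d(πM)` and `Z > 0`, and
`∫ ψ dν = a / Z`. Since the estimator is bounded by `‖ψ‖_∞`, the elementary bound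
`|A/B - a/Z| ≤ (2|A - a| + 4‖ψ‖_∞ |B - Z|) / Z` transfers the convergence to the ratio.
-/

open MeasureTheory ProbabilityTheory Filter
open scoped ENNReal Topology

lemma abs_div_le_of_abs_le_mul {A B C : ℝ} (hB : 0 ≤ B) (hC : 0 ≤ C) (h : |A| ≤ C * B) :
    |A / B| ≤ C := by
  rw [abs_div, abs_of_nonneg hB]
  exact div_le_of_le_mul₀ hB hC h

lemma abs_div_sub_div_le {A B a Z C : ℝ} (hZ : 0 < Z) (hB : 0 ≤ B) (hA : |A| ≤ C * B)
    (ha : |a| ≤ C * Z) : |A / B - a / Z| ≤ (2 * |A - a| + 4 * C * |B - Z|) / Z := by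
  have hC : 0 ≤ C := nonneg_of_mul_nonneg_left ((abs_nonneg a).trans ha) hZ
  rw [le_div_iff₀ hZ]
  rcases lt_or_ge (2 * B) Z with hsmall | hlarge
  · -- `B` is far from `Z`, and both ratios are bounded by `C`
    have h1 := abs_div_le_of_abs_le_mul hB hC hA
    have h2 := abs_div_le_of_abs_le_mul hZ.le hC ha
    have h3 : Z ≤ 2 * |B - Z| := by rw [abs_sub_comm, abs_of_pos (by linarith)]; linarith
    calc |A / B - a / Z| * Z ≤ (C + C) * Z := by
          gcongr; exact (abs_sub _ _).trans (add_le_add h1 h2)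
      _ ≤ 2 * |A - a| + 4 * C * |B - Z| := by
          nlinarith [mul_le_mul_of_nonneg_left h3 hC, abs_nonneg (A - a)]
  · have hBpos : 0 < B := by linarith
    have hsplit : (A / B - a / Z) * Z = (A - a + a / Z * (Z - B)) * (Z / B) := by
      field_simp; ring
    have hratio : Z / B ≤ 2 := div_le_of_le_mul₀ hB zero_le_two (by linarith)
    have hnum : |A - a + a / Z * (Z - B)| ≤ |A - a| + C * |B - Z| := by
      refine (abs_add_le _ _).trans (add_le_add_right ?_ _)
      rw [abs_mul, abs_sub_comm Z]
      exact mul_le_mul_of_nonneg_right (abs_div_le_of_abs_le_mul hZ.le hC ha) (abs_nonneg _)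
    have hCBZ : 0 ≤ C * |B - Z| := mul_nonneg hC (abs_nonneg _)
    calc |A / B - a / Z| * Z = |A - a + a / Z * (Z - B)| * (Z / B) := by
          rw [← abs_of_pos (div_pos hZ hBpos), ← abs_mul, ← hsplit, abs_mul, abs_of_pos hZ]
      _ ≤ (|A - a| + C * |B - Z|) * 2 :=
          mul_le_mul hnum hratio (div_pos hZ hBpos).le (by positivity)
      _ ≤ 2 * |A - a| + 4 * C * |B - Z| := by linarith

lemma abs_sum_mul_le_of_sum_eq_one {ι : Type*} {s : Finset ι} {w v : ι → ℝ} {B : ℝ}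
    (hw : ∀ i, 0 ≤ w i) (hsum : ∑ i ∈ s, w i = 1) (hv : ∀ i, |v i| ≤ B) :
    |∑ i ∈ s, w i * v i| ≤ B :=
  calc |∑ i ∈ s, w i * v i| ≤ ∑ i ∈ s, w i * B := by
        refine (Finset.abs_sum_le_sum_abs _ _).trans (Finset.sum_le_sum fun i _ => ?_)
        rw [abs_mul, abs_of_nonneg (hw i)]
        exact mul_le_mul_of_nonneg_left (hv i) (hw i)
    _ = B := by rw [← Finset.sum_mul, hsum, one_mul]

namespace MeasureTheory

variable {α β : Type*} [MeasurableSpace α] [MeasurableSpace β] {μ : Measure α} {f : α → ℝ} {B : ℝ}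

lemma MemLp.of_abs_le [IsFiniteMeasure μ] (hf : AEStronglyMeasurable f μ) (hB : ∀ x, |f x| ≤ B)
    (p : ℝ≥0∞) : MemLp f p μ :=
  MemLp.of_bound hf B (ae_of_all _ fun x => (Real.norm_eq_abs _).trans_le (hB x))

lemma Integrable.of_abs_le [IsFiniteMeasure μ] (hf : AEStronglyMeasurable f μ)
    (hB : ∀ x, |f x| ≤ B) : Integrable f μ :=
  memLp_one_iff_integrable.mp (MemLp.of_abs_le hf hB 1)

lemma abs_integral_le_of_abs_le [IsProbabilityMeasure μ] (hB : ∀ x, |f x| ≤ B) :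
    |∫ x, f x ∂μ| ≤ B := by
  simpa [Real.norm_eq_abs] using norm_integral_le_of_norm_le_const (μ := μ)
    (ae_of_all _ fun x => (Real.norm_eq_abs (f x)).trans_le (hB x))

lemma abs_integral_le_mul_integral {g : α → ℝ} {C : ℝ} (hg : Integrable g μ)
    (h : ∀ x, |f x| ≤ C * g x) : |∫ x, f x ∂μ| ≤ C * ∫ x, g x ∂μ := by
  rw [← integral_const_mul]
  exact norm_integral_le_of_norm_le (f := f) (hg.const_mul C) (ae_of_all _ h)

lemma integral_bind_kernel [SFinite μ] (κ : Kernel α β) [IsSFiniteKernel κ] {f : β → ℝ}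
    (hf : Integrable f (κ ∘ₘ μ)) : ∫ y, f y ∂(κ ∘ₘ μ) = ∫ x, ∫ y, f y ∂κ x ∂μ := by
  rw [← Measure.snd_compProd] at hf ⊢
  rw [Measure.snd, integral_map measurable_snd.aemeasurable hf.aestronglyMeasurable]
  exact Measure.integral_compProd (hf.comp_measurable measurable_snd)

lemma isProbabilityMeasure_sum_ofReal_smul {ι : Type*} {s : Finset ι} {ν : ι → Measure α}
    [∀ i, IsProbabilityMeasure (ν i)] {w : ι → ℝ} (hw : ∀ i, 0 ≤ w i)
    (hsum : ∑ i ∈ s, w i = 1) : IsProbabilityMeasure (∑ i ∈ s, ENNReal.ofReal (w i) • ν i) := by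
  constructor
  simp [Measure.finsetSum_apply, ← ENNReal.ofReal_sum_of_nonneg (fun i _ => hw i), hsum]

lemma integral_sum_ofReal_smul {ι : Type*} {s : Finset ι} {ν : ι → Measure α} {w : ι → ℝ}
    (hw : ∀ i, 0 ≤ w i) (hf : ∀ i ∈ s, Integrable f (ν i)) :
    ∫ x, f x ∂(∑ i ∈ s, ENNReal.ofReal (w i) • ν i) = ∑ i ∈ s, w i * ∫ x, f x ∂ν i := by
  rw [integral_finsetSum_measure fun i hi => (hf i hi).smul_measure ENNReal.ofReal_ne_top]
  simp [integral_smul_measure, ENNReal.toReal_ofReal (hw _)]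

lemma integral_smul_withDensity_ofReal (ρ : Measure α) {g : α → ℝ} (hg : Measurable g)
    (hg0 : ∀ x, 0 ≤ g x) {Z : ℝ} (hZ : 0 ≤ Z) (ψ : α → ℝ) :
    ∫ x, ψ x ∂((ENNReal.ofReal Z)⁻¹ • ρ.withDensity fun x => ENNReal.ofReal (g x))
      = (∫ x, g x * ψ x ∂ρ) / Z := by
  rw [integral_smul_measure, integral_withDensity_eq_integral_toReal_smul hg.ennreal_ofReal
    (ae_of_all _ fun _ => ENNReal.ofReal_lt_top)]
  simp [ENNReal.toReal_inv, ENNReal.toReal_ofReal hZ, ENNReal.toReal_ofReal (hg0 _),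
    div_eq_inv_mul]

end MeasureTheory

section SampleMean

variable {α : Type*} {N : ℕ}

noncomputable def sampleMean (f : α → ℝ) (y : Fin N → α) : ℝ := (N : ℝ)⁻¹ * ∑ n, f (y n)

lemma sampleMean_nonneg {f : α → ℝ} (hf : ∀ x, 0 ≤ f x) (y : Fin N → α) : 0 ≤ sampleMean f y :=
  mul_nonneg (by positivity) (Finset.sum_nonneg fun n _ => hf (y n))

lemma abs_sampleMean_le_sampleMean {f g : α → ℝ} (h : ∀ x, |f x| ≤ g x) (y : Fin N → α) :
    |sampleMean f y| ≤ sampleMean g y := by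
  unfold sampleMean
  rw [abs_mul, abs_of_nonneg (by positivity)]
  gcongr
  exact (Finset.abs_sum_le_sum_abs _ _).trans (Finset.sum_le_sum fun n _ => h (y n))

lemma sampleMean_const (hN : 0 < N) (c : ℝ) (y : Fin N → α) : sampleMean (fun _ => c) y = c := by
  simp only [sampleMean, Finset.sum_const, Finset.card_univ, Fintype.card_fin, nsmul_eq_mul]
  field_simp

lemma sampleMean_const_mul (c : ℝ) (f : α → ℝ) (y : Fin N → α) :
    sampleMean (fun x => c * f x) y = c * sampleMean f y := by
  simp only [sampleMean, ← Finset.mul_sum]; ring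

lemma abs_sampleMean_le (hN : 0 < N) {f : α → ℝ} {B : ℝ} (hB : ∀ x, |f x| ≤ B)
    (y : Fin N → α) : |sampleMean f y| ≤ B :=
  (abs_sampleMean_le_sampleMean hB y).trans_eq (sampleMean_const hN B y)

lemma sampleMean_mul_div_sampleMean (f g : α → ℝ) (y : Fin N → α) :
    sampleMean (fun x => g x * f x) y / sampleMean g y
      = (∑ n, g (y n) * f (y n)) / ∑ n, g (y n) := by
  rcases N.eq_zero_or_pos with rfl | hN
  · simp [sampleMean]
  · exact mul_div_mul_left _ _ (by positivity)

variable [MeasurableSpace α]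

lemma measurable_sampleMean {f : α → ℝ} (hf : Measurable f) :
    Measurable (sampleMean (N := N) f) := by
  unfold sampleMean; fun_prop

lemma memLp_sampleMean {Ω : Type*} [MeasurableSpace Ω] {P : Measure Ω} [IsFiniteMeasure P]
    {f : α → ℝ} (hf : Measurable f) {B : ℝ} (hB : ∀ x, |f x| ≤ B) {Y : Fin N → Ω → α}
    (hY : ∀ n, Measurable (Y n)) (p : ℝ≥0∞) :
    MemLp (fun ω => sampleMean f fun n => Y n ω) p P := by
  have hsum : MemLp (∑ n, fun ω => f (Y n ω)) p P := memLp_finsetSum' _ fun n _ =>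
    MemLp.of_abs_le (hf.comp (hY n)).aestronglyMeasurable (fun ω => hB (Y n ω)) p
  simpa [sampleMean, Finset.sum_apply] using hsum.const_mul (N : ℝ)⁻¹

variable (μ : Measure α) [IsProbabilityMeasure μ]

lemma integral_sampleMean_pi (hN : 0 < N) {f : α → ℝ} (hf : Integrable f μ) :
    ∫ y, sampleMean f y ∂(Measure.pi fun _ : Fin N => μ) = ∫ x, f x ∂μ := by
  simp only [sampleMean]
  rw [integral_const_mul, integral_finsetSum _ fun n _ => integrable_comp_eval hf]
  simp only [integral_comp_eval (μ := fun _ : Fin N => μ) hf.aestronglyMeasurable]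
  simp only [Finset.sum_const, Finset.card_univ, Fintype.card_fin, nsmul_eq_mul]
  field_simp

lemma integral_sampleMean_sq_pi_le (hN : 0 < N) {f : α → ℝ} (hf : Measurable f) {B : ℝ}
    (hB : ∀ x, |f x| ≤ B) :
    ∫ y, sampleMean f y ^ 2 ∂(Measure.pi fun _ : Fin N => μ) ≤ (∫ x, f x ∂μ) ^ 2 + B ^ 2 / N := by
  have hf2 : MemLp f 2 μ := MemLp.of_abs_le hf.aestronglyMeasurable hB 2
  have hvar : Var[sampleMean f; Measure.pi fun _ : Fin N => μ] = Var[f; μ] / N := by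
    have : sampleMean (N := N) f = fun y => (N : ℝ)⁻¹ * (∑ n, fun y : Fin N → α => f (y n)) y := by
      ext y; simp [sampleMean, Finset.sum_apply]
    rw [this, variance_const_mul, variance_sum_pi fun _ => hf2]
    simp only [inv_pow, Finset.sum_const, Finset.card_univ, Fintype.card_fin, nsmul_eq_mul]
    field_simp
  have hvar_le : Var[f; μ] ≤ B ^ 2 := by
    refine (variance_le_expectation_sq hf.aestronglyMeasurable).trans ?_
    have hsq (x : α) : (f ^ 2) x ≤ B ^ 2 := by
      simpa only [Pi.pow_apply, sq_abs] using pow_le_pow_left₀ (abs_nonneg _) (hB x) 2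
    simpa using integral_mono hf2.integrable_sq (integrable_const (B ^ 2)) hsq
  have hS : MemLp (sampleMean (N := N) f) 2 (Measure.pi fun _ : Fin N => μ) :=
    MemLp.of_abs_le (measurable_sampleMean hf).aestronglyMeasurable (abs_sampleMean_le hN hB) 2
  have hdecomp := variance_eq_sub hS
  rw [integral_sampleMean_pi μ hN (hf2.integrable one_le_two), hvar] at hdecomp
  simp only [Pi.pow_apply] at hdecomp
  have : Var[f; μ] / N ≤ B ^ 2 / N := by gcongr
  linarith

end SampleMean

section Conditional

variable {Ω : Type*} {m mΩ : MeasurableSpace Ω} {P : Measure Ω} [IsProbabilityMeasure P]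

lemma integral_sq_sub_le_of_condExp (hm : m ≤ mΩ) {T L : Ω → ℝ} {v : ℝ}
    (hT : MemLp T 2 P) (hL : MemLp L 2 P) (hLm : StronglyMeasurable[m] L)
    (h1 : P[T|m] =ᵐ[P] L) (h2 : P[fun ω => T ω ^ 2|m] ≤ᵐ[P] fun ω => L ω ^ 2 + v) :
    ∫ ω, (T ω - L ω) ^ 2 ∂P ≤ v := by
  have hLT : Integrable (L * T) P := hL.integrable_mul hT
  have hcross : ∫ ω, (L * T) ω ∂P = ∫ ω, L ω ^ 2 ∂P := by
    rw [← integral_condExp hm]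
    refine integral_congr_ae ?_
    filter_upwards [condExp_mul_of_stronglyMeasurable_left hLm hLT (hT.integrable one_le_two), h1]
      with ω hmul hω
    rw [hmul, Pi.mul_apply, hω, sq]
  have hsecond : ∫ ω, T ω ^ 2 ∂P ≤ ∫ ω, L ω ^ 2 ∂P + v := by
    rw [← integral_condExp hm]
    calc ∫ ω, P[fun ω => T ω ^ 2|m] ω ∂P ≤ ∫ ω, (L ω ^ 2 + v) ∂P :=
          integral_mono_ae integrable_condExp (hL.integrable_sq.add (integrable_const v)) h2
      _ = ∫ ω, L ω ^ 2 ∂P + v := by simp [integral_add hL.integrable_sq (integrable_const v)]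
  have hexpand : ∫ ω, (T ω - L ω) ^ 2 ∂P
      = ∫ ω, T ω ^ 2 ∂P - 2 * ∫ ω, (L * T) ω ∂P + ∫ ω, L ω ^ 2 ∂P := by
    have hpt : (fun ω => (T ω - L ω) ^ 2) = fun ω => T ω ^ 2 - 2 * (L * T) ω + L ω ^ 2 := by
      ext ω; simp only [Pi.mul_apply]; ring
    rw [hpt, integral_add (f := fun ω => T ω ^ 2 - 2 * (L * T) ω)
        (hT.integrable_sq.sub (hLT.const_mul 2)) hL.integrable_sq,
      integral_sub hT.integrable_sq (hLT.const_mul 2), integral_const_mul]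
  linarith

lemma integral_sq_sampleMean_sub_le {𝒳 : Type*} [MeasurableSpace 𝒳] (hm : m ≤ mΩ) {N : ℕ}
    (hN : 0 < N) {Λ : Ω → Measure 𝒳} [∀ ω, IsProbabilityMeasure (Λ ω)] {Y : Fin N → Ω → 𝒳}
    (hY : ∀ n, Measurable (Y n))
    (hcond : ∀ F : (Fin N → 𝒳) → ℝ, Measurable F → (∃ B, ∀ y, |F y| ≤ B) →
      P[fun ω => F (fun n => Y n ω)|m] =ᵐ[P] fun ω => ∫ y, F y ∂(Measure.pi fun _ => Λ ω))
    {f : 𝒳 → ℝ} (hf : Measurable f) {B : ℝ} (hB : ∀ x, |f x| ≤ B)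
    (hΛf : StronglyMeasurable[m] fun ω => ∫ x, f x ∂Λ ω) :
    ∫ ω, (sampleMean f (fun n => Y n ω) - ∫ x, f x ∂Λ ω) ^ 2 ∂P ≤ B ^ 2 / N := by
  have hS_bdd (y : Fin N → 𝒳) : |sampleMean f y| ≤ B := abs_sampleMean_le hN hB y
  have hS2_bdd (y : Fin N → 𝒳) : |sampleMean f y ^ 2| ≤ B ^ 2 :=
    (abs_pow _ 2).trans_le (pow_le_pow_left₀ (abs_nonneg _) (hS_bdd y) 2)
  refine integral_sq_sub_le_of_condExp hm (memLp_sampleMean hf hB hY 2)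
    (MemLp.of_abs_le (hΛf.mono hm).aestronglyMeasurable (fun ω => abs_integral_le_of_abs_le hB) 2)
    hΛf ?_ ?_
  · refine (hcond _ (measurable_sampleMean hf) ⟨B, hS_bdd⟩).trans (ae_of_all _ fun ω => ?_)
    exact integral_sampleMean_pi _ hN (Integrable.of_abs_le hf.aestronglyMeasurable hB)
  · refine (hcond _ ((measurable_sampleMean hf).pow_const 2) ⟨B ^ 2, hS2_bdd⟩).le.trans
      (ae_of_all _ fun ω => ?_)
    exact integral_sampleMean_sq_pi_le _ hN hf hB

end Conditional

section L2

variable {Ω : Type*} [MeasurableSpace Ω] {P : Measure Ω}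

lemma integral_sq_sub_le_two_mul_add {U V W : Ω → ℝ} (hU : MemLp U 2 P) (hV : MemLp V 2 P)
    (hW : MemLp W 2 P) :
    ∫ ω, (U ω - W ω) ^ 2 ∂P ≤ 2 * (∫ ω, (U ω - V ω) ^ 2 ∂P + ∫ ω, (V ω - W ω) ^ 2 ∂P) := by
  have hUV : Integrable (fun ω => (U ω - V ω) ^ 2) P := (hU.sub hV).integrable_sq
  have hVW : Integrable (fun ω => (V ω - W ω) ^ 2) P := (hV.sub hW).integrable_sq
  rw [← integral_add hUV hVW, ← integral_const_mul]
  refine integral_mono_of_nonneg (ae_of_all _ fun ω => sq_nonneg _)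
    ((hUV.add hVW).const_mul 2) (ae_of_all _ fun ω => ?_)
  simpa using add_sq_le (a := U ω - V ω) (b := V ω - W ω)

lemma tendsto_integral_sq_sub_of_tendsto [IsFiniteMeasure P] {U V : ℕ → Ω → ℝ} {c : ℝ}
    (hU : ∀ᶠ N in atTop, MemLp (U N) 2 P) (hV : ∀ᶠ N in atTop, MemLp (V N) 2 P)
    (hUV : Tendsto (fun N => ∫ ω, (U N ω - V N ω) ^ 2 ∂P) atTop (𝓝 0))
    (hVc : Tendsto (fun N => ∫ ω, (V N ω - c) ^ 2 ∂P) atTop (𝓝 0)) :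
    Tendsto (fun N => ∫ ω, (U N ω - c) ^ 2 ∂P) atTop (𝓝 0) := by
  refine tendsto_of_tendsto_of_tendsto_of_le_of_le' tendsto_const_nhds
    (by simpa using (hUV.add hVc).const_mul 2)
    (Eventually.of_forall fun N => integral_nonneg fun ω => sq_nonneg _) ?_
  filter_upwards [hU, hV] with N hUN hVN
  exact integral_sq_sub_le_two_mul_add hUN hVN (memLp_const c)

lemma tendsto_integral_sq_div_sub_div [IsFiniteMeasure P] {A B : ℕ → Ω → ℝ} {a Z C : ℝ}
    (hZ : 0 < Z) (ha : |a| ≤ C * Z) (hA : ∀ N, MemLp (A N) 2 P) (hB : ∀ N, MemLp (B N) 2 P)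
    (hB0 : ∀ N ω, 0 ≤ B N ω) (hAB : ∀ N ω, |A N ω| ≤ C * B N ω)
    (hAa : Tendsto (fun N => ∫ ω, (A N ω - a) ^ 2 ∂P) atTop (𝓝 0))
    (hBZ : Tendsto (fun N => ∫ ω, (B N ω - Z) ^ 2 ∂P) atTop (𝓝 0)) :
    Tendsto (fun N => ∫ ω, (A N ω / B N ω - a / Z) ^ 2 ∂P) atTop (𝓝 0) := by
  have hbound (N : ℕ) : ∫ ω, (A N ω / B N ω - a / Z) ^ 2 ∂P
      ≤ 2 * ((2 / Z) ^ 2 * ∫ ω, (A N ω - a) ^ 2 ∂P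
        + (4 * C / Z) ^ 2 * ∫ ω, (B N ω - Z) ^ 2 ∂P) := by
    have hAa : Integrable (fun ω => (A N ω - a) ^ 2) P := ((hA N).sub (memLp_const a)).integrable_sq
    have hBZ : Integrable (fun ω => (B N ω - Z) ^ 2) P := ((hB N).sub (memLp_const Z)).integrable_sq
    rw [← integral_const_mul, ← integral_const_mul,
      ← integral_add (hAa.const_mul _) (hBZ.const_mul _), ← integral_const_mul]
    refine integral_mono_of_nonneg (ae_of_all _ fun ω => sq_nonneg _)
      (((hAa.const_mul _).add (hBZ.const_mul _)).const_mul 2) (ae_of_all _ fun ω => ?_)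
    have h := abs_div_sub_div_le hZ (hB0 N ω) (hAB N ω) ha
    calc (A N ω / B N ω - a / Z) ^ 2 ≤ (2 / Z * |A N ω - a| + 4 * C / Z * |B N ω - Z|) ^ 2 := by
          rw [← sq_abs]
          refine pow_le_pow_left₀ (abs_nonneg _) (h.trans_eq ?_) 2
          ring
      _ ≤ _ := by
          refine add_sq_le.trans_eq ?_
          simp only [mul_pow, sq_abs]
  refine tendsto_of_tendsto_of_tendsto_of_le_of_le tendsto_const_nhds ?_
    (fun N => integral_nonneg fun ω => sq_nonneg _) hbound
  simpa using ((hAa.const_mul _).add (hBZ.const_mul _)).const_mul 2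

end L2

theorem tendsto_integral_sq_sampleMean_sub {𝒳 𝒴 Ω : Type*} [MeasurableSpace 𝒳]
    [MeasurableSpace 𝒴] [mΩ : MeasurableSpace Ω] {P : Measure Ω} [IsProbabilityMeasure P]
    (M : Kernel 𝒳 𝒴) [IsMarkovKernel M]
    {X : (N : ℕ) → Fin N → Ω → 𝒳} {wb : (N : ℕ) → Fin N → Ω → ℝ} {Y : (N : ℕ) → Fin N → Ω → 𝒴}
    (hY : ∀ N n, Measurable (Y N n)) (hwb_nonneg : ∀ N n ω, 0 ≤ wb N n ω)
    (hwb_sum : ∀ N : ℕ, 1 ≤ N → ∀ ω, ∑ n : Fin N, wb N n ω = 1)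
    {𝒢 : ℕ → MeasurableSpace Ω} (h𝒢_le : ∀ N, 𝒢 N ≤ mΩ)
    (hXw : ∀ N, Measurable[𝒢 N] fun ω (n : Fin N) => (X N n ω, wb N n ω))
    (hcond : ∀ (N : ℕ) (F : (Fin N → 𝒴) → ℝ), Measurable F → (∃ B, ∀ y, |F y| ≤ B) →
      P[fun ω => F (fun n => Y N n ω)|𝒢 N] =ᵐ[P]
        fun ω => ∫ y, F y ∂(Measure.pi fun _ : Fin N =>
          ∑ n : Fin N, ENNReal.ofReal (wb N n ω) • M (X N n ω)))
    {f : 𝒴 → ℝ} (hf : Measurable f) {B : ℝ} (hB : ∀ y, |f y| ≤ B) {c : ℝ}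
    (hweighted : Tendsto (fun N => ∫ ω, (∑ n : Fin N, wb N n ω * ∫ y, f y ∂M (X N n ω) - c) ^ 2 ∂P)
      atTop (𝓝 0)) :
    Tendsto (fun N => ∫ ω, (sampleMean f (fun n => Y N n ω) - c) ^ 2 ∂P) atTop (𝓝 0) := by
  set V : (N : ℕ) → Ω → ℝ := fun N ω => ∑ n : Fin N, wb N n ω * ∫ y, f y ∂M (X N n ω)
  have hMf : Measurable fun x => ∫ y, f y ∂M x := hf.stronglyMeasurable.integral_kernel.measurable
  have hMf_bdd (x : 𝒳) : |∫ y, f y ∂M x| ≤ B := abs_integral_le_of_abs_le hB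
  have hV_meas (N : ℕ) : Measurable[𝒢 N] (V N) := by
    have : Measurable fun p : Fin N → 𝒳 × ℝ => ∑ n, (p n).2 * ∫ y, f y ∂M (p n).1 :=
      Finset.measurable_sum _ fun n _ =>
        (measurable_pi_apply n).snd.mul (hMf.comp (measurable_pi_apply n).fst)
    exact this.comp (hXw N)
  have hV (N : ℕ) (hN : 1 ≤ N) : MemLp (V N) 2 P :=
    MemLp.of_abs_le ((hV_meas N).mono (h𝒢_le N) le_rfl).aestronglyMeasurable
      (fun ω => abs_sum_mul_le_of_sum_eq_one (hwb_nonneg N · ω) (hwb_sum N hN ω)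
        fun n => hMf_bdd _) 2
  have hsample (N : ℕ) (hN : 1 ≤ N) :
      ∫ ω, (sampleMean f (fun n => Y N n ω) - V N ω) ^ 2 ∂P ≤ B ^ 2 / N := by
    have (ω : Ω) := isProbabilityMeasure_sum_ofReal_smul (ν := fun n => M (X N n ω))
      (hwb_nonneg N · ω) (hwb_sum N hN ω)
    have hΛV (ω : Ω) : ∫ y, f y ∂(∑ n, ENNReal.ofReal (wb N n ω) • M (X N n ω)) = V N ω :=
      integral_sum_ofReal_smul (hwb_nonneg N · ω)
        fun n _ => Integrable.of_abs_le hf.aestronglyMeasurable hB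
    have := integral_sq_sampleMean_sub_le (h𝒢_le N) hN (hY N) (hcond N) hf hB
      (by rw [funext hΛV]; exact (hV_meas N).stronglyMeasurable)
    simpa only [hΛV] using this
  refine tendsto_integral_sq_sub_of_tendsto (V := V)
    (Eventually.of_forall fun N => memLp_sampleMean hf hB (hY N) 2)
    ((eventually_ge_atTop 1).mono hV) ?_ hweighted
  refine tendsto_of_tendsto_of_tendsto_of_le_of_le' tendsto_const_nhds
    (tendsto_const_div_atTop_nhds_zero_nat (B ^ 2))
    (Eventually.of_forall fun N => integral_nonneg fun ω => sq_nonneg _)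
    ((eventually_ge_atTop 1).mono hsample)

theorem bootstrap_step_L2_convergence_general
    {𝒳 : Type*} [MeasurableSpace 𝒳]
    (π0 : Measure 𝒳) [IsProbabilityMeasure π0]
    (M : Kernel 𝒳 𝒳) [IsMarkovKernel M]
    (g : 𝒳 → ℝ) (hg_meas : Measurable g) (hg_nonneg : ∀ x, 0 ≤ g x)
    (Bg : ℝ) (hg_bdd : ∀ x, g x ≤ Bg)
    (Z : ℝ) (hZ : Z = ∫ x, ∫ x', g x' ∂(M x) ∂π0) (hZ_pos : 0 < Z)
    (ν : Measure 𝒳)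
    (hν : ν = (ENNReal.ofReal Z)⁻¹ •
        ((π0.bind (fun x => M x)).withDensity (fun x => ENNReal.ofReal (g x))))
    {Ω : Type*} [MeasurableSpace Ω] (P : Measure Ω) [IsProbabilityMeasure P]
    (X : (N : ℕ) → Fin N → Ω → 𝒳) (wb : (N : ℕ) → Fin N → Ω → ℝ)
    (Y : (N : ℕ) → Fin N → Ω → 𝒳)
    (hY_meas : ∀ N n, Measurable (Y N n))
    (hwb_nonneg : ∀ N n ω, 0 ≤ wb N n ω)
    (hwb_sum : ∀ N : ℕ, 1 ≤ N → ∀ ω, (∑ n : Fin N, wb N n ω) = 1)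
    -- (i)  `L²`-consistency of the weighted particles at time `t − 1`
    (hconsistent : ∀ φ : 𝒳 → ℝ, Measurable φ → (∃ B, ∀ x, |φ x| ≤ B) →
      Tendsto
        (fun N : ℕ =>
          ∫ ω, ((∑ n : Fin N, wb N n ω * φ (X N n ω)) - ∫ x, φ x ∂π0) ^ 2 ∂P)
        atTop (nhds 0))
    -- conditional sampling structure:  given the σ-algebra `𝒢 N` generated by
    -- `(X N, wb N)`, the `Y N n` are jointly distributed as the `N`-fold product of the
    -- random mixture `Λ_N = ∑ₙ wb ⁿ • M (X ⁿ, ·)`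
    (𝒢 : ℕ → MeasurableSpace Ω)
    (h𝒢 : ∀ N, 𝒢 N =
      MeasurableSpace.comap (fun ω => fun n : Fin N => (X N n ω, wb N n ω)) inferInstance)
    (h𝒢_le : ∀ N, 𝒢 N ≤ ‹MeasurableSpace Ω›)
    (hcond : ∀ (N : ℕ) (F : (Fin N → 𝒳) → ℝ), Measurable F → (∃ B, ∀ y, |F y| ≤ B) →
      (P[(fun ω => F (fun n => Y N n ω)) | 𝒢 N]) =ᵐ[P]
        (fun ω => ∫ y, F y ∂(Measure.pi (fun _ : Fin N =>
          ∑ n : Fin N, ENNReal.ofReal (wb N n ω) • (M (X N n ω))))))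
    (ψ : 𝒳 → ℝ) (hψ_meas : Measurable ψ)
    (Mψ : ℝ) (hψ_bdd : ∀ x, |ψ x| ≤ Mψ) :
    Tendsto
      (fun N : ℕ =>
        ∫ ω, ((∑ n : Fin N, g (Y N n ω) * ψ (Y N n ω)) /
                (∑ n : Fin N, g (Y N n ω)) - ∫ x, ψ x ∂ν) ^ 2 ∂P)
      atTop (nhds 0) := by
  have hg_abs (x : 𝒳) : |g x| ≤ Bg := (abs_of_nonneg (hg_nonneg x)).trans_le (hg_bdd x)
  have hgψ_le (x : 𝒳) : |g x * ψ x| ≤ Mψ * g x := by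
    rw [abs_mul, abs_of_nonneg (hg_nonneg x), mul_comm]
    exact mul_le_mul_of_nonneg_right (hψ_bdd x) (hg_nonneg x)
  have hgψ_meas : Measurable fun x => g x * ψ x := hg_meas.mul hψ_meas
  have hgψ_abs (x : 𝒳) : |g x * ψ x| ≤ Mψ * Bg :=
    (hgψ_le x).trans (mul_le_mul_of_nonneg_left (hg_bdd x) ((abs_nonneg _).trans (hψ_bdd x)))
  have hpredictive {f : 𝒳 → ℝ} (hf : Measurable f) {B : ℝ} (hB : ∀ x, |f x| ≤ B) :
      ∫ x, ∫ x', f x' ∂M x ∂π0 = ∫ x, f x ∂(M ∘ₘ π0) :=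
    (integral_bind_kernel M (Integrable.of_abs_le hf.aestronglyMeasurable hB)).symm
  have hLLN {f : 𝒳 → ℝ} (hf : Measurable f) {B : ℝ} (hB : ∀ x, |f x| ≤ B) :
      Tendsto (fun N => ∫ ω, (sampleMean f (fun n => Y N n ω) - ∫ x, f x ∂(M ∘ₘ π0)) ^ 2 ∂P)
        atTop (𝓝 0) :=
    hpredictive hf hB ▸ tendsto_integral_sq_sampleMean_sub M hY_meas hwb_nonneg hwb_sum h𝒢_le
      (fun N => by rw [h𝒢 N]; exact comap_measurable _) hcond hf hB
      (hconsistent (fun x => ∫ x', f x' ∂M x) hf.stronglyMeasurable.integral_kernel.measurable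
        ⟨B, fun x => abs_integral_le_of_abs_le hB⟩)
  rw [hpredictive hg_meas hg_abs] at hZ
  have hνψ : ∫ x, ψ x ∂ν = (∫ x, g x * ψ x ∂(M ∘ₘ π0)) / Z := by
    rw [hν]; exact integral_smul_withDensity_ofReal _ hg_meas hg_nonneg hZ_pos.le ψ
  rw [hνψ]
  simpa only [sampleMean_mul_div_sampleMean] using tendsto_integral_sq_div_sub_div hZ_pos
    (hZ ▸ abs_integral_le_mul_integral (Integrable.of_abs_le hg_meas.aestronglyMeasurable hg_abs)
      hgψ_le)
    (fun N => memLp_sampleMean hgψ_meas hgψ_abs (hY_meas N) 2)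
    (fun N => memLp_sampleMean hg_meas hg_abs (hY_meas N) 2)
    (fun N ω => sampleMean_nonneg hg_nonneg _)
    (fun N ω => (abs_sampleMean_le_sampleMean hgψ_le _).trans_eq (sampleMean_const_mul _ _ _))
    (hLLN hgψ_meas hgψ_abs) (hZ ▸ hLLN hg_meas hg_abs)

/-- **One time-step of Theorem 1 for the bootstrap particle filter:** if the weighted
particle system `(Xⁿ, w̄ⁿ)` is `L²`-consistent for the time-`(t−1)` filter `π`, and the
new particles `Yⁿ` are conditionally i.i.d. draws from the particle mixture
`Λ_N = ∑ₙ w̄ⁿ M(Xⁿ, ·)` given the particle system, then the likelihood-reweighted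
self-normalized estimator converges in `L²(P)` to `∫ ψ dν` for the Bayes-updated
filter `ν`. -/
theorem bootstrap_step_L2_convergence
    {𝒳 : Type*} [MeasurableSpace 𝒳]
    (π0 : Measure 𝒳) [IsProbabilityMeasure π0]
    (M : Kernel 𝒳 𝒳) [IsMarkovKernel M]
    (g : 𝒳 → ℝ) (hg_meas : Measurable g) (hg_nonneg : ∀ x, 0 ≤ g x)
    (Bg : ℝ) (hg_bdd : ∀ x, g x ≤ Bg)
    (Z : ℝ) (hZ : Z = ∫ x, ∫ x', g x' ∂(M x) ∂π0) (hZ_pos : 0 < Z)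
    (ν : Measure 𝒳)
    (hν : ν = (ENNReal.ofReal Z)⁻¹ •
        ((π0.bind (fun x => M x)).withDensity (fun x => ENNReal.ofReal (g x))))
    {Ω : Type*} [MeasurableSpace Ω] (P : Measure Ω) [IsProbabilityMeasure P]
    (X : (N : ℕ) → Fin N → Ω → 𝒳) (wb : (N : ℕ) → Fin N → Ω → ℝ)
    (Y : (N : ℕ) → Fin N → Ω → 𝒳)
    (hX_meas : ∀ N n, Measurable (X N n)) (hwb_meas : ∀ N n, Measurable (wb N n))
    (hY_meas : ∀ N n, Measurable (Y N n))
    (hwb_nonneg : ∀ N n ω, 0 ≤ wb N n ω)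
    (hwb_sum : ∀ N : ℕ, 1 ≤ N → ∀ ω, (∑ n : Fin N, wb N n ω) = 1)
    -- (i)  `L²`-consistency of the weighted particles at time `t − 1`
    (hconsistent : ∀ φ : 𝒳 → ℝ, Measurable φ → (∃ B, ∀ x, |φ x| ≤ B) →
      Tendsto
        (fun N : ℕ =>
          ∫ ω, ((∑ n : Fin N, wb N n ω * φ (X N n ω)) - ∫ x, φ x ∂π0) ^ 2 ∂P)
        atTop (nhds 0))
    -- conditional sampling structure:  given the σ-algebra `𝒢 N` generated by
    -- `(X N, wb N)`, the `Y N n` are jointly distributed as the `N`-fold product of the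
    -- random mixture `Λ_N = ∑ₙ wb ⁿ • M (X ⁿ, ·)`
    (𝒢 : ℕ → MeasurableSpace Ω)
    (h𝒢 : ∀ N, 𝒢 N =
      MeasurableSpace.comap (fun ω => fun n : Fin N => (X N n ω, wb N n ω)) inferInstance)
    (h𝒢_le : ∀ N, 𝒢 N ≤ ‹MeasurableSpace Ω›)
    (hcond : ∀ (N : ℕ) (F : (Fin N → 𝒳) → ℝ), Measurable F → (∃ B, ∀ y, |F y| ≤ B) →
      (P[(fun ω => F (fun n => Y N n ω)) | 𝒢 N]) =ᵐ[P]
        (fun ω => ∫ y, F y ∂(Measure.pi (fun _ : Fin N =>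
          ∑ n : Fin N, ENNReal.ofReal (wb N n ω) • (M (X N n ω))))))
    (ψ : 𝒳 → ℝ) (hψ_meas : Measurable ψ)
    (Mψ : ℝ) (hψ_bdd : ∀ x, |ψ x| ≤ Mψ) :
    Tendsto
      (fun N : ℕ =>
        ∫ ω, ((∑ n : Fin N, g (Y N n ω) * ψ (Y N n ω)) /
                (∑ n : Fin N, g (Y N n ω)) - ∫ x, ψ x ∂ν) ^ 2 ∂P)
      atTop (nhds 0) :=
  bootstrap_step_L2_convergence_general π0 M g hg_meas hg_nonneg Bg hg_bdd Z hZ hZ_pos ν hν P X wb Y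
    hY_meas hwb_nonneg hwb_sum hconsistent 𝒢 h𝒢 h𝒢_le hcond ψ hψ_meas Mψ hψ_bdd
end

section
/- The DIMMPF weight of Eq. (9) evaluated on the forward pass equals w = t̃ · G · S / (N_reg · t̃) = G · S / N_reg; moreover, with the constant c = p / N_reg² (which does not depend on the particle), c · μ / λ = G · S / N_reg as well. Hence the weighting function Eqs. (9a)–(9b) reduces, on the forward pass, to the same value as the importance weight obtained in Algorithm 1 using the IMMPF proposal λ_IMMPF. (Theorem 2.) -/
/-- **Theorem 2:** on the forward pass (where the stop-gradient is the identity), the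
DIMMPF weight of Eq. (9) equals `w = t̃·G·S/(N_reg·t̃) = G·S/N_reg`, and with the
particle-independent constant `c = p/N_reg²` the importance weight `c·μ/λ` obtained in
Algorithm 1 with the IMMPF proposal (`λ = t̃/(N_reg·S)`, `μ = G·t̃/p`) takes the same
value `G·S/N_reg`. -/
theorem dimmpf_weight_forward_pass
    (N Nreg : ℕ) (hNreg : 1 ≤ Nreg)
    (wb K M : Fin N → ℝ)
    (hwb_nonneg : ∀ m, 0 ≤ wb m) (hK_nonneg : ∀ m, 0 ≤ K m)
    (hM_nonneg : ∀ m, 0 ≤ M m)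
    (G p : ℝ) (hG : 0 < G) (hp : 0 < p)
    (tt S : ℝ)
    (htt : tt = ∑ m : Fin N, wb m * K m * M m)
    (hS : S = ∑ m : Fin N, wb m * K m)
    (htt_pos : 0 < tt) (hS_pos : 0 < S) :
    tt * G * S / ((Nreg : ℝ) * tt) = G * S / (Nreg : ℝ) ∧
    (p / (Nreg : ℝ) ^ 2) * (G * tt / p) / (tt / ((Nreg : ℝ) * S))
      = G * S / (Nreg : ℝ) := by
  have hN : (0:ℝ) < (Nreg:ℝ) := by exact_mod_cast hNreg
  constructor
  · field_simp
  · field_simp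
end

section
/- The self-normalized deterministic-allocation estimator (∑_{k=1}^K ∑_{j=1}^J w(X_{k,j}) ψ(X_{k,j})) / (∑_{k=1}^K ∑_{j=1}^J w(X_{k,j})) (defined to be 0 when the denominator vanishes) converges in L²(P) to ∫_𝒳 ψ π dν as J → ∞; in particular it is a weakly consistent estimator of the target mean. (Corollary A.1 of the paper, single-importance-sampling-step case: the IMMPF with an equal, deterministically chosen number of particles per regime exhibits L² convergence under the same conditions as Theorem 1.) -/
open MeasureTheory ProbabilityTheory Filter

/-!
Write the estimator as `S / D` with `S = ∑ w(Xᵢ) ψ(Xᵢ)` and `D = ∑ w(Xᵢ)` over the `n = JK`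
samples. Because `q̄ w = π` and every component is sampled equally often, `E S = n μ` with
`μ = ∫ ψ π`, and `E D = n` (the deterministic-mixture weights are unbiased). Since
`|S / D| ≤ M`, the identity `n (S / D - μ) = (S - n μ) - (S / D) (D - n)` bounds
`n² E (S / D - μ)²` by `2 Var S + 2 M² Var D`, and independence of the bounded summands makes
both variances `O(n)`.
-/

lemma sq_mul_div_sub_le {S D n μ M : ℝ} (hSD : |S| ≤ M * D) :
    (n * (S / D - μ)) ^ 2 ≤ 2 * (S - n * μ) ^ 2 + 2 * M ^ 2 * (D - n) ^ 2 := by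
  rcases eq_or_ne D 0 with rfl | hD
  · have hS : S = 0 := abs_nonpos_iff.mp (by simpa using hSD)
    subst hS
    nlinarith [sq_nonneg (n * μ), sq_nonneg (M * n)]
  have hratio : (S / D) ^ 2 ≤ M ^ 2 := by
    rw [div_pow, div_le_iff₀ (by positivity), ← mul_pow, ← sq_abs S]
    exact sq_le_sq' (by linarith [abs_nonneg S]) hSD
  have hsplit : n * (S / D - μ) = (S - n * μ) - S / D * (D - n) := by
    field_simp
    ring
  rw [hsplit]
  nlinarith [sq_nonneg (S - n * μ + S / D * (D - n)),
    mul_le_mul_of_nonneg_right hratio (sq_nonneg (D - n))]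

lemma tendsto_zero_of_nonneg_of_natCast_mul_le {u : ℕ → ℝ} {c : ℝ} (h0 : ∀ n, 0 ≤ u n)
    (hu : ∀ n : ℕ, n * u n ≤ c) : Tendsto u atTop (nhds 0) :=
  squeeze_zero' (Eventually.of_forall h0)
    ((eventually_ge_atTop 1).mono fun n hn => by
      rw [le_div_iff₀ (Nat.cast_pos.mpr hn), mul_comm]
      exact hu n)
    (tendsto_const_div_atTop_nhds_zero_nat c)

section Variance

variable {Ω : Type*} [MeasurableSpace Ω] {P : Measure Ω} [IsProbabilityMeasure P]

lemma variance_le_sq_of_abs_le {X : Ω → ℝ} {B : ℝ} (hX : AEMeasurable X P)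
    (hB : ∀ᵐ ω ∂P, |X ω| ≤ B) : variance X P ≤ B ^ 2 := by
  have h := variance_le_sq_of_bounded (hB.mono fun ω hω => abs_le.mp hω) hX
  rwa [show (B - -B) / 2 = B by ring] at h

variable {ι : Type*} {Y : ι → Ω → ℝ} {B : ℝ}

lemma integrable_sq_sum_sub (hYm : ∀ i, AEMeasurable (Y i) P) (hB : ∀ i, ∀ᵐ ω ∂P, |Y i ω| ≤ B)
    (s : Finset ι) (c : ℝ) : Integrable (fun ω => (∑ i ∈ s, Y i ω - c) ^ 2) P := by
  have hsum : MemLp (∑ i ∈ s, Y i) 2 P :=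
    memLp_finsetSum' s fun i _ => .of_bound (hYm i).aestronglyMeasurable B (hB i)
  simpa only [Pi.sub_apply, Finset.sum_apply] using (hsum.sub (memLp_const c)).integrable_sq

lemma integral_sq_sum_sub_sum_integral_le (hY : iIndepFun Y P) (hYm : ∀ i, AEMeasurable (Y i) P)
    (hB : ∀ i, ∀ᵐ ω ∂P, |Y i ω| ≤ B) (s : Finset ι) :
    ∫ ω, (∑ i ∈ s, Y i ω - ∑ i ∈ s, P[Y i]) ^ 2 ∂P ≤ s.card * B ^ 2 := by
  have hL2 (i : ι) : MemLp (Y i) 2 P := MemLp.of_bound (hYm i).aestronglyMeasurable B (hB i)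
  have hvar : variance (∑ i ∈ s, Y i) P = ∫ ω, (∑ i ∈ s, Y i ω - ∑ i ∈ s, P[Y i]) ^ 2 ∂P := by
    rw [variance_eq_integral (Finset.aemeasurable_sum s fun i _ => hYm i)]
    simp only [Finset.sum_apply]
    rw [integral_finsetSum s fun i _ => (hL2 i).integrable one_le_two]
  rw [← hvar, IndepFun.variance_sum (fun i _ => hL2 i) fun i _ j _ hij => hY.indepFun hij]
  calc ∑ i ∈ s, variance (Y i) P ≤ ∑ _i ∈ s, B ^ 2 :=
        Finset.sum_le_sum fun i _ => variance_le_sq_of_abs_le (hYm i) (hB i)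
    _ = s.card * B ^ 2 := by simp

end Variance

section SelfNormalized

variable {Ω ι : Type*} [MeasurableSpace Ω] {P : Measure Ω} [IsProbabilityMeasure P]

theorem card_mul_integral_sq_div_sub_le (s : Finset ι) {Y Z : ι → Ω → ℝ}
    (hY : iIndepFun Y P) (hZ : iIndepFun Z P)
    (hYm : ∀ i, AEMeasurable (Y i) P) (hZm : ∀ i, AEMeasurable (Z i) P) {B C M μ : ℝ}
    (hYB : ∀ i, ∀ᵐ ω ∂P, |Y i ω| ≤ B) (hZC : ∀ i, ∀ᵐ ω ∂P, |Z i ω| ≤ C)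
    (hYZ : ∀ i ω, |Y i ω| ≤ M * Z i ω)
    (hEY : ∑ i ∈ s, P[Y i] = s.card * μ) (hEZ : ∑ i ∈ s, P[Z i] = (s.card : ℝ)) :
    (s.card : ℝ) * ∫ ω, ((∑ i ∈ s, Y i ω) / (∑ i ∈ s, Z i ω) - μ) ^ 2 ∂P
      ≤ 2 * (B ^ 2 + M ^ 2 * C ^ 2) := by
  set n : ℝ := (s.card : ℝ)
  have hSD (ω : Ω) : |∑ i ∈ s, Y i ω| ≤ M * ∑ i ∈ s, Z i ω := by
    rw [Finset.mul_sum]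
    exact (Finset.abs_sum_le_sum_abs _ _).trans (Finset.sum_le_sum fun i _ => hYZ i ω)
  have hdev := (integrable_sq_sum_sub hYm hYB s (n * μ)).const_mul 2 |>.add
    ((integrable_sq_sum_sub hZm hZC s n).const_mul (2 * M ^ 2))
  have hsq : n ^ 2 * ∫ ω, ((∑ i ∈ s, Y i ω) / (∑ i ∈ s, Z i ω) - μ) ^ 2 ∂P
      ≤ n * (2 * (B ^ 2 + M ^ 2 * C ^ 2)) :=
    calc n ^ 2 * ∫ ω, ((∑ i ∈ s, Y i ω) / (∑ i ∈ s, Z i ω) - μ) ^ 2 ∂P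
        = ∫ ω, (n * ((∑ i ∈ s, Y i ω) / (∑ i ∈ s, Z i ω) - μ)) ^ 2 ∂P := by
          rw [← integral_const_mul]
          simp only [mul_pow]
      _ ≤ ∫ ω, (2 * (∑ i ∈ s, Y i ω - n * μ) ^ 2
            + 2 * M ^ 2 * (∑ i ∈ s, Z i ω - n) ^ 2) ∂P :=
          integral_mono_of_nonneg (ae_of_all _ fun _ => sq_nonneg _) hdev
            (ae_of_all _ fun ω => sq_mul_div_sub_le (hSD ω))
      _ = 2 * ∫ ω, (∑ i ∈ s, Y i ω - ∑ i ∈ s, P[Y i]) ^ 2 ∂P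
            + 2 * M ^ 2 * ∫ ω, (∑ i ∈ s, Z i ω - ∑ i ∈ s, P[Z i]) ^ 2 ∂P := by
          rw [integral_add ((integrable_sq_sum_sub hYm hYB s _).const_mul _)
            ((integrable_sq_sum_sub hZm hZC s _).const_mul _), integral_const_mul,
            integral_const_mul, hEY, hEZ]
      _ ≤ 2 * (n * B ^ 2) + 2 * M ^ 2 * (n * C ^ 2) := by
          gcongr
          · exact integral_sq_sum_sub_sum_integral_le hY hYm hYB s
          · exact integral_sq_sum_sub_sum_integral_le hZ hZm hZC s
      _ = n * (2 * (B ^ 2 + M ^ 2 * C ^ 2)) := by ring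
  rcases (show 0 ≤ n by positivity).eq_or_lt with hn | hn
  · rw [← hn, zero_mul]
    positivity
  · rw [sq, mul_assoc] at hsq
    exact le_of_mul_le_mul_left hsq hn

end SelfNormalized

section ImportanceSampling

variable {𝒳 Ω : Type*} [MeasurableSpace 𝒳] [MeasurableSpace Ω] {ν : Measure 𝒳} {P : Measure Ω}

lemma integral_comp_eq_integral_density_mul {X : Ω → 𝒳} (hX : Measurable X) {q : 𝒳 → ℝ}
    (hq : Measurable q) (hq0 : ∀ x, 0 ≤ q x)
    (hlaw : P.map X = ν.withDensity fun x => ENNReal.ofReal (q x)) {g : 𝒳 → ℝ}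
    (hg : Measurable g) : ∫ ω, g (X ω) ∂P = ∫ x, q x * g x ∂ν := by
  rw [← integral_map hX.aemeasurable hg.aestronglyMeasurable, hlaw,
    integral_withDensity_eq_integral_toReal_smul hq.ennreal_ofReal
      (ae_of_all _ fun _ => ENNReal.ofReal_lt_top)]
  simp only [ENNReal.toReal_ofReal (hq0 _), smul_eq_mul]

lemma ae_comp_of_map_eq_withDensity {X : Ω → 𝒳} (hX : AEMeasurable X P) {d : 𝒳 → ENNReal}
    (hlaw : P.map X = ν.withDensity d) {p : 𝒳 → Prop} (hp : ∀ᵐ x ∂ν, p x) :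
    ∀ᵐ ω ∂P, p (X ω) :=
  ae_of_ae_map hX (hlaw ▸ (withDensity_absolutelyContinuous ν d).ae_le hp)

lemma sum_integral_density_mul_weight_mul {K : ℕ} (hK : K ≠ 0) {q : Fin K → 𝒳 → ℝ}
    (hq : ∀ k, Integrable (q k) ν) {π w f : 𝒳 → ℝ} {C M : ℝ}
    (hw : AEStronglyMeasurable w ν) (hwC : ∀ᵐ x ∂ν, |w x| ≤ C)
    (hf : AEStronglyMeasurable f ν) (hfM : ∀ x, |f x| ≤ M)
    (hmix : ∀ᵐ x ∂ν, (K : ℝ)⁻¹ * (∑ k, q k x) * w x = π x) :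
    ∑ k, ∫ x, q k x * (w x * f x) ∂ν = K * ∫ x, f x * π x ∂ν := by
  have hint (k : Fin K) : Integrable (fun x => q k x * (w x * f x)) ν :=
    (hq k).mul_bdd (hw.mul hf) (hwC.mono fun x hx => norm_mul_le_of_le hx (hfM x))
  rw [← integral_finsetSum _ fun k _ => hint k, ← integral_const_mul]
  refine integral_congr_ae (hmix.mono fun x hx => ?_)
  simp only [← hx, ← Finset.sum_mul]
  field_simp

lemma sum_integral_weight_mul_comp_eq {K : ℕ} (hK : K ≠ 0) {q : Fin K → 𝒳 → ℝ}
    (hq_meas : ∀ k, Measurable (q k)) (hq_nonneg : ∀ k x, 0 ≤ q k x)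
    (hq : ∀ k, Integrable (q k) ν) {X : Fin K → ℕ → Ω → 𝒳} (hX_meas : ∀ k j, Measurable (X k j))
    (hX_law : ∀ k j, P.map (X k j) = ν.withDensity fun x => ENNReal.ofReal (q k x))
    {π w : 𝒳 → ℝ} {C : ℝ} (hw : Measurable w) (hwC : ∀ᵐ x ∂ν, |w x| ≤ C)
    (hmix : ∀ᵐ x ∂ν, (K : ℝ)⁻¹ * (∑ k, q k x) * w x = π x) {f : 𝒳 → ℝ} {M : ℝ}
    (hf : Measurable f) (hfM : ∀ x, |f x| ≤ M) (J : ℕ) :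
    ∑ p ∈ (Finset.univ : Finset (Fin K)) ×ˢ Finset.range J,
        ∫ ω, w (X p.1 p.2 ω) * f (X p.1 p.2 ω) ∂P
      = ((Finset.univ : Finset (Fin K)) ×ˢ Finset.range J).card * ∫ x, f x * π x ∂ν := by
  rw [Finset.sum_product, Finset.card_product, Finset.card_univ, Finset.card_range,
    Fintype.card_fin]
  calc ∑ k, ∑ j ∈ Finset.range J, ∫ ω, w (X k j ω) * f (X k j ω) ∂P
      = ∑ k, ∑ _j ∈ Finset.range J, ∫ x, q k x * (w x * f x) ∂ν :=
        Finset.sum_congr rfl fun k _ => Finset.sum_congr rfl fun j _ =>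
          integral_comp_eq_integral_density_mul (hX_meas k j) (hq_meas k) (hq_nonneg k)
            (hX_law k j) (hw.mul hf)
    _ = J * (K * ∫ x, f x * π x ∂ν) := by
        rw [← sum_integral_density_mul_weight_mul hK hq hw.aestronglyMeasurable hwC
          hf.aestronglyMeasurable hfM hmix]
        simp [Finset.mul_sum]
    _ = _ := by push_cast; ring

variable [IsProbabilityMeasure P]

theorem card_mul_integral_sq_selfNormalized_sub_le {ι : Type*} (s : Finset ι)
    {X : ι → Ω → 𝒳} (hX : iIndepFun X P) (hX_meas : ∀ i, Measurable (X i)) {w ψ : 𝒳 → ℝ}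
    (hw : Measurable w) (hψ : Measurable ψ) (hw_nonneg : ∀ x, 0 ≤ w x) {C M μ : ℝ}
    (hwC : ∀ i, ∀ᵐ ω ∂P, |w (X i ω)| ≤ C) (hψM : ∀ x, |ψ x| ≤ M)
    (hEY : ∑ i ∈ s, ∫ ω, w (X i ω) * ψ (X i ω) ∂P = s.card * μ)
    (hEZ : ∑ i ∈ s, ∫ ω, w (X i ω) ∂P = s.card) :
    s.card * ∫ ω, ((∑ i ∈ s, w (X i ω) * ψ (X i ω)) / (∑ i ∈ s, w (X i ω)) - μ) ^ 2 ∂P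
      ≤ 4 * (C * M) ^ 2 :=
  .trans_eq (card_mul_integral_sq_div_sub_le s (Y := fun i ω => w (X i ω) * ψ (X i ω))
    (hX.comp (fun _ x => w x * ψ x) fun _ => hw.mul hψ) (hX.comp (fun _ => w) fun _ => hw)
    (fun i => ((hw.mul hψ).comp (hX_meas i)).aemeasurable)
    (fun i => (hw.comp (hX_meas i)).aemeasurable)
    (fun i => (hwC i).mono fun ω hω =>
      (norm_mul_le_of_le hω (hψM _) : ‖w (X i ω) * ψ (X i ω)‖ ≤ C * M)) hwC
    (fun i ω => by
      rw [abs_mul, abs_of_nonneg (hw_nonneg _), mul_comm]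
      exact mul_le_mul_of_nonneg_right (hψM _) (hw_nonneg _))
    hEY hEZ) (by ring)

end ImportanceSampling

theorem detMIS_selfNormalized_L2_convergence_general
    {𝒳 : Type*} [MeasurableSpace 𝒳] (ν : Measure 𝒳)
    (K : ℕ) (hK : 1 ≤ K)
    (q : Fin K → 𝒳 → ℝ) (hq_meas : ∀ k, Measurable (q k))
    (hq_nonneg : ∀ k x, 0 ≤ q k x) (hq_int : ∀ k, ∫ x, q k x ∂ν = 1)
    (π0 : 𝒳 → ℝ) (hπ0_meas : Measurable π0) (hπ0_nonneg : ∀ x, 0 ≤ π0 x)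
    (hπ0_int : ∫ x, π0 x ∂ν = 1)
    (qbar : 𝒳 → ℝ) (hqbar : qbar = fun x => (K : ℝ)⁻¹ * ∑ k : Fin K, q k x)
    (w : 𝒳 → ℝ) (hw : w = fun x => π0 x / qbar x)
    (hac : ∀ᵐ x ∂ν, qbar x = 0 → π0 x = 0)
    (C : ℝ) (hw_bdd : ∀ᵐ x ∂ν, w x ≤ C)
    (ψ : 𝒳 → ℝ) (hψ_meas : Measurable ψ) (M : ℝ) (hψ_bdd : ∀ x, |ψ x| ≤ M)
    {Ω : Type*} [MeasurableSpace Ω] (P : Measure Ω) [IsProbabilityMeasure P]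
    (X : Fin K → ℕ → Ω → 𝒳) (hX_meas : ∀ k j, Measurable (X k j))
    (hX_law : ∀ k j, P.map (X k j) = ν.withDensity (fun x => ENNReal.ofReal (q k x)))
    (hX_indep : iIndepFun (fun p : Fin K × ℕ => X p.1 p.2) P) :
    Tendsto
      (fun J : ℕ =>
        ∫ ω, ((∑ k : Fin K, ∑ j ∈ Finset.range J, w (X k j ω) * ψ (X k j ω)) /
                (∑ k : Fin K, ∑ j ∈ Finset.range J, w (X k j ω))
              - ∫ x, ψ x * π0 x ∂ν) ^ 2 ∂P)
      atTop (nhds 0) := by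
  have hw_nonneg (x : 𝒳) : 0 ≤ w x := by
    subst hw hqbar
    exact div_nonneg (hπ0_nonneg x)
      (mul_nonneg (by positivity) (Finset.sum_nonneg fun k _ => hq_nonneg k x))
  have hw_meas : Measurable w := by
    subst hw hqbar
    fun_prop
  have hmix : ∀ᵐ x ∂ν, (K : ℝ)⁻¹ * (∑ k, q k x) * w x = π0 x := by
    filter_upwards [hac] with x hx
    subst hw hqbar
    exact mul_div_cancel_of_imp' hx
  have hwC : ∀ᵐ x ∂ν, |w x| ≤ C :=
    hw_bdd.mono fun x hx => (abs_of_nonneg (hw_nonneg x)).trans_le hx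
  have hmean {f : 𝒳 → ℝ} {B : ℝ} (hf : Measurable f) (hfB : ∀ x, |f x| ≤ B) (J : ℕ) :=
    sum_integral_weight_mul_comp_eq (P := P) (by omega) hq_meas hq_nonneg
      (fun k => .of_integral_ne_zero (by simp [hq_int k])) hX_meas hX_law hw_meas hwC hmix
      hf hfB J
  have hbound (J : ℕ) := card_mul_integral_sq_selfNormalized_sub_le _ hX_indep
    (fun p => hX_meas p.1 p.2) hw_meas hψ_meas hw_nonneg
    (fun p => ae_comp_of_map_eq_withDensity (hX_meas p.1 p.2).aemeasurable (hX_law p.1 p.2) hwC)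
    hψ_bdd (hmean hψ_meas hψ_bdd J)
    (by simpa [hπ0_int] using hmean measurable_const (fun _ => abs_one.le) J)
  simp only [Finset.sum_product, Finset.card_product, Finset.card_univ, Fintype.card_fin,
    Finset.card_range, Nat.cast_mul] at hbound
  refine tendsto_zero_of_nonneg_of_natCast_mul_le (fun J => integral_nonneg fun ω => sq_nonneg _)
    fun J => (mul_le_mul_of_nonneg_right ?_ (integral_nonneg fun ω => sq_nonneg _)).trans (hbound J)
  exact le_mul_of_one_le_left J.cast_nonneg (by exact_mod_cast hK)

/-- **Corollary A.1 (single importance-sampling step):** the self-normalized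
deterministic-allocation multiple importance sampling estimator, with exactly `J`
samples from each of the `K` per-regime proposals, converges in `L²(P)` to the target
mean `∫ ψ π dν` as `J → ∞`; in particular it is a weakly consistent estimator. -/
theorem detMIS_selfNormalized_L2_convergence
    {𝒳 : Type*} [MeasurableSpace 𝒳] (ν : Measure 𝒳) [SigmaFinite ν]
    (K : ℕ) (hK : 1 ≤ K)
    (q : Fin K → 𝒳 → ℝ) (hq_meas : ∀ k, Measurable (q k))
    (hq_nonneg : ∀ k x, 0 ≤ q k x) (hq_int : ∀ k, ∫ x, q k x ∂ν = 1)
    (π0 : 𝒳 → ℝ) (hπ0_meas : Measurable π0) (hπ0_nonneg : ∀ x, 0 ≤ π0 x)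
    (hπ0_int : ∫ x, π0 x ∂ν = 1)
    (qbar : 𝒳 → ℝ) (hqbar : qbar = fun x => (K : ℝ)⁻¹ * ∑ k : Fin K, q k x)
    (w : 𝒳 → ℝ) (hw : w = fun x => π0 x / qbar x)
    (hac : ∀ᵐ x ∂ν, qbar x = 0 → π0 x = 0)
    (C : ℝ) (hC : 0 < C) (hw_bdd : ∀ᵐ x ∂ν, w x ≤ C)
    (ψ : 𝒳 → ℝ) (hψ_meas : Measurable ψ) (M : ℝ) (hψ_bdd : ∀ x, |ψ x| ≤ M)
    {Ω : Type*} [MeasurableSpace Ω] (P : Measure Ω) [IsProbabilityMeasure P]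
    (X : Fin K → ℕ → Ω → 𝒳) (hX_meas : ∀ k j, Measurable (X k j))
    (hX_law : ∀ k j, P.map (X k j) = ν.withDensity (fun x => ENNReal.ofReal (q k x)))
    (hX_indep : iIndepFun (fun p : Fin K × ℕ => X p.1 p.2) P) :
    Tendsto
      (fun J : ℕ =>
        ∫ ω, ((∑ k : Fin K, ∑ j ∈ Finset.range J, w (X k j ω) * ψ (X k j ω)) /
                (∑ k : Fin K, ∑ j ∈ Finset.range J, w (X k j ω))
              - ∫ x, ψ x * π0 x ∂ν) ^ 2 ∂P)
      atTop (nhds 0) :=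
  detMIS_selfNormalized_L2_convergence_general ν K hK q hq_meas hq_nonneg hq_int π0 hπ0_meas
    hπ0_nonneg hπ0_int qbar hqbar w hw hac C hw_bdd ψ hψ_meas M hψ_bdd P X hX_meas hX_law hX_indep
end
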